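/- p_4 is the smallest term of the sequence of critical values: for every integer n ≥ 1, p_n ≥ p_4. -/

import Mathlib

/-!
Write `V_n(a) = P(M_n ≤ a)`, so that `U_n = V_n(1)` and first-step analysis gives
`V_{n+1}(a) = p V_n(a-1) + q V_n(a+1)`. We show `W_n ≤ U_n` at `p = 47/100` for every `n ≠ 4`,
so `p_n ≥ 47/100`, whereas `U_4 - W_4 ≤ 1 - 2p - p²q² < 0` for `p > 47/100`, so `p_4 ≤ 47/100`.

At `p = 47/100` an induction on `n` carries two invariants: `π(n,1) ≤ U_n + ε`, an equality except
at `n = 4`, and `π(n,0) ≤ (q/p)² U_n - ρ`. The first bounds `π(n, j+2)` by `V_n(j+2) - V_n(j) + ε`,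
which yields `W_n ≤ U_n`; the second propagates because the gap `q V_{n+1}(a) - p V_n(a)` stays
above the harmonic function `δ (1 - (p/q)^(a+1))` once it does so at `n = 5`. The horizons
`n ≤ 5` are checked by exact computation. The constants are `ε = 21/10000`, `ρ = 3/250` and
`δ = 17/1000`.
-/

open Finset

/-- Probability weight of a single path of length `N`. -/
noncomputable def pathProb (p : ℝ) (N : ℕ) (x : Fin N → Bool) : ℝ :=
  p ^ (Finset.univ.filter (fun i => x i = true)).card *
    (1 - p) ^ (N - (Finset.univ.filter (fun i => x i = true)).card)

open Classical in
/-- Probability of an event `E` for the `N`-step Bernoulli walk. -/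
noncomputable def walkProb (p : ℝ) (N : ℕ) (E : Set (Fin N → Bool)) : ℝ :=
  ∑ x : Fin N → Bool, if x ∈ E then pathProb p N x else 0

/-- Partial sum `S_j` of the walk given by the path `x`. -/
def walkS (N : ℕ) (x : Fin N → Bool) (j : ℕ) : ℤ :=
  ∑ i ∈ Finset.univ.filter (fun i : Fin N => (i : ℕ) < j), (if x i then (1 : ℤ) else -1)

/-- Running maximum `M_N = max_{0 ≤ j ≤ N} S_j`. -/
def walkM (N : ℕ) (x : Fin N → Bool) : ℤ :=
  (Finset.range (N + 1)).sup' Finset.nonempty_range_add_one (fun j => walkS N x j)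

/-- `U_n(p) = P(M_n ≤ 1)`. -/
noncomputable def U (n : ℕ) (p : ℝ) : ℝ :=
  walkProb p n {x | walkM n x ≤ 1}

/-- Value function `π_p(n, j)`, defined by backward induction. -/
noncomputable def piVal (p : ℝ) : ℕ → ℕ → ℝ
  | 0, 0 => 1
  | 0, 1 => 1
  | 0, _ + 2 => 0
  | n + 1, 0 => p * piVal p n 0 + (1 - p) * piVal p n 1
  | n + 1, 1 => max (U (n + 1) p) (p * piVal p n 0 + (1 - p) * piVal p n 2)
  | n + 1, j + 2 => p * piVal p n (j + 1) + (1 - p) * piVal p n (j + 3)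

/-- `W_n(p) = p·π_p(n-1,0) + q·π_p(n-1,2)` (for `n ≥ 1`). -/
noncomputable def W (n : ℕ) (p : ℝ) : ℝ :=
  p * piVal p (n - 1) 0 + (1 - p) * piVal p (n - 1) 2

/-- Critical value `p_n = sup {p ∈ (0,1) : U_n(p) ≥ W_n(p)}`. -/
noncomputable def pc (n : ℕ) : ℝ :=
  sSup {p : ℝ | p ∈ Set.Ioo (0 : ℝ) 1 ∧ U n p ≥ W n p}

lemma walkS_zero (N : ℕ) (x : Fin N → Bool) : walkS N x 0 = 0 := by
  simp [walkS]

lemma walkS_cons_succ (n : ℕ) (b : Bool) (y : Fin n → Bool) (j : ℕ) :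
    walkS (n + 1) (Fin.cons b y) (j + 1) = (if b then 1 else -1) + walkS n y j := by
  simp [walkS, Finset.sum_filter, Fin.sum_univ_succ]

lemma walkM_le_iff (N : ℕ) (x : Fin N → Bool) (a : ℤ) :
    walkM N x ≤ a ↔ ∀ j < N + 1, walkS N x j ≤ a := by
  simp [walkM]

lemma walkM_cons_le_iff (n : ℕ) (b : Bool) (y : Fin n → Bool) (a : ℤ) :
    walkM (n + 1) (Fin.cons b y) ≤ a ↔ 0 ≤ a ∧ (if b then 1 else -1) + walkM n y ≤ a := by
  rw [walkM_le_iff, Nat.forall_lt_succ_left, walkS_zero]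
  simp only [walkS_cons_succ, ← le_sub_iff_add_le', walkM_le_iff]

lemma walkM_nonneg (N : ℕ) (x : Fin N → Bool) : 0 ≤ walkM N x :=
  walkS_zero N x ▸ le_sup' (fun j => walkS N x j) (mem_range.2 N.succ_pos)

lemma pathProb_cons (p : ℝ) (n : ℕ) (b : Bool) (y : Fin n → Bool) :
    pathProb p (n + 1) (Fin.cons b y) = (if b then p else 1 - p) * pathProb p n y := by
  have hcard : #{i | y i = true} ≤ n := card_le_univ _ |>.trans_eq (card_fin n)
  have hcons : #{i | (Fin.cons b y : Fin (n + 1) → Bool) i = true}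
      = (if b then 1 else 0) + #{i | y i = true} := by
    simp only [card_filter, Fin.sum_univ_succ, Fin.cons_zero, Fin.cons_succ]
  rw [pathProb, pathProb, hcons]
  cases b
  · simp [Nat.sub_add_comm hcard, pow_succ]; ring
  · simp [add_comm 1, pow_succ]; ring

lemma walkProb_succ (p : ℝ) (n : ℕ) (E : Set (Fin (n + 1) → Bool)) :
    walkProb p (n + 1) E = p * walkProb p n {y | Fin.cons true y ∈ E}
      + (1 - p) * walkProb p n {y | Fin.cons false y ∈ E} := by
  classical
  rw [walkProb, ← (Fin.consEquiv fun _ => Bool).sum_comp, Fintype.sum_prod_type,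
    Fintype.sum_bool, walkProb, walkProb, mul_sum, mul_sum]
  simp [Fin.consEquiv, pathProb_cons]

lemma walkProb_empty (p : ℝ) (n : ℕ) : walkProb p n ∅ = 0 := by
  simp [walkProb]

noncomputable def maxCdf (p : ℝ) : ℕ → ℕ → ℝ
  | 0, _ => 1
  | n + 1, 0 => (1 - p) * maxCdf p n 1
  | n + 1, a + 1 => p * maxCdf p n a + (1 - p) * maxCdf p n (a + 2)

lemma walkProb_walkM_le (p : ℝ) (n a : ℕ) :
    walkProb p n {x | walkM n x ≤ a} = maxCdf p n a := by
  induction n generalizing a with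
  | zero =>
    have h : {x : Fin 0 → Bool | walkM 0 x ≤ a} = Set.univ := by
      ext x; simp [walkM_le_iff, walkS_zero]
    simp [h, walkProb, pathProb, maxCdf]
  | succ n ih =>
    rw [walkProb_succ]
    cases a with
    | zero =>
      have hdown : {y | Fin.cons true y ∈ {x | walkM (n + 1) x ≤ ((0 : ℕ) : ℤ)}} = ∅ := by
        ext y
        have := walkM_nonneg n y
        simp only [Set.mem_ofPred_eq, walkM_cons_le_iff, ↓reduceIte, Set.mem_empty_iff_false,
          iff_false]
        omega
      have hup : {y | Fin.cons false y ∈ {x | walkM (n + 1) x ≤ ((0 : ℕ) : ℤ)}} =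
          {y | walkM n y ≤ ((1 : ℕ) : ℤ)} := by
        ext y
        simp only [Set.mem_ofPred_eq, walkM_cons_le_iff, Bool.false_eq_true, ↓reduceIte]
        omega
      rw [hdown, hup, walkProb_empty, ih, maxCdf, mul_zero, zero_add]
    | succ a =>
      have hdown : {y | Fin.cons true y ∈ {x | walkM (n + 1) x ≤ ((a + 1 : ℕ) : ℤ)}} =
          {y | walkM n y ≤ (a : ℤ)} := by
        ext y
        simp only [Set.mem_ofPred_eq, walkM_cons_le_iff, ↓reduceIte]
        omega
      have hup : {y | Fin.cons false y ∈ {x | walkM (n + 1) x ≤ ((a + 1 : ℕ) : ℤ)}} =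
          {y | walkM n y ≤ ((a + 2 : ℕ) : ℤ)} := by
        ext y
        simp only [Set.mem_ofPred_eq, walkM_cons_le_iff, Bool.false_eq_true, ↓reduceIte]
        omega
      rw [hdown, hup, ih, ih, maxCdf]

lemma U_eq_maxCdf (n : ℕ) (p : ℝ) : U n p = maxCdf p n 1 :=
  walkProb_walkM_le p n 1

lemma maxCdf_of_le (p : ℝ) {n a : ℕ} (h : n ≤ a) : maxCdf p n a = 1 := by
  induction n generalizing a with
  | zero => rfl
  | succ n ih =>
    obtain ⟨a, rfl⟩ := Nat.exists_eq_add_of_le' (Nat.succ_le_iff.1 h |>.trans_le' n.zero_le)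
    rw [maxCdf, ih (by omega), ih (by omega)]
    ring

lemma le_maxCdf_gap {p : ℝ} (hp0 : 0 ≤ p) (hp1 : p ≤ 1) {f : ℕ → ℝ}
    (hf0 : f 0 ≤ (1 - p) * f 1) (hf : ∀ a, f (a + 1) ≤ p * f a + (1 - p) * f (a + 2))
    {n₀ : ℕ} (h₀ : ∀ a, f a ≤ (1 - p) * maxCdf p (n₀ + 1) a - p * maxCdf p n₀ a) :
    ∀ n ≥ n₀, ∀ a, f a ≤ (1 - p) * maxCdf p (n + 1) a - p * maxCdf p n a := by
  have hq : 0 ≤ 1 - p := by linarith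
  intro n hn
  induction n, hn using Nat.le_induction with
  | base => exact h₀
  | succ n _ ih =>
    rintro (_ | a)
    · have := mul_le_mul_of_nonneg_left (ih 1) hq
      simp only [maxCdf] at this ⊢
      linarith
    · have := mul_le_mul_of_nonneg_left (ih a) hp0
      have := mul_le_mul_of_nonneg_left (ih (a + 2)) hq
      simp only [maxCdf] at this ⊢
      linarith [hf a]

lemma one_sub_pow_ratio_harmonic {p : ℝ} (hp : p ≠ 1) (a : ℕ) :
    1 - (p / (1 - p)) ^ (a + 2) =
      p * (1 - (p / (1 - p)) ^ (a + 1)) + (1 - p) * (1 - (p / (1 - p)) ^ (a + 3)) := by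
  have hq : 1 - p ≠ 0 := sub_ne_zero.2 hp.symm
  have hr : p + (1 - p) * (p / (1 - p)) ^ 2 = p / (1 - p) := by
    field_simp
    ring
  linear_combination (p / (1 - p)) ^ (a + 1) * hr

lemma piVal_succ_zero (p : ℝ) (n : ℕ) :
    piVal p (n + 1) 0 = p * piVal p n 0 + (1 - p) * piVal p n 1 := rfl

lemma piVal_succ_one (p : ℝ) (n : ℕ) : piVal p (n + 1) 1 = max (U (n + 1) p) (W (n + 1) p) := rfl

lemma piVal_succ_add_two (p : ℝ) (n j : ℕ) :
    piVal p (n + 1) (j + 2) = p * piVal p n (j + 1) + (1 - p) * piVal p n (j + 3) := rfl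

lemma W_succ (n : ℕ) (p : ℝ) : W (n + 1) p = p * piVal p n 0 + (1 - p) * piVal p n 2 := rfl

lemma U_le_piVal_one (p : ℝ) (n : ℕ) : U n p ≤ piVal p n 1 := by
  cases n with
  | zero => simp [U_eq_maxCdf, maxCdf, piVal]
  | succ n => exact le_max_left _ _

lemma piVal_add_two_le {p ε : ℝ} (hp0 : 0 ≤ p) (hp1 : p ≤ 1) {m : ℕ}
    (h : ∀ k ≤ m, piVal p k 1 ≤ U k p + ε) (j : ℕ) :
    piVal p m (j + 2) ≤ maxCdf p m (j + 2) - maxCdf p m j + ε := by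
  have hq : 0 ≤ 1 - p := by linarith
  induction m generalizing j with
  | zero =>
    have := h 0 le_rfl
    simp only [piVal, U_eq_maxCdf, maxCdf] at this ⊢
    linarith
  | succ m ih =>
    have ih := ih (fun k hk => h k (hk.trans m.le_succ))
    rw [piVal_succ_add_two]
    rcases j with _ | j
    · have h1 := mul_le_mul_of_nonneg_left (h m m.le_succ) hp0
      have h3 := mul_le_mul_of_nonneg_left (ih 1) hq
      simp only [U_eq_maxCdf, maxCdf] at h1 h3 ⊢
      linarith
    · have h2 := mul_le_mul_of_nonneg_left (ih j) hp0
      have h4 := mul_le_mul_of_nonneg_left (ih (j + 2)) hq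
      simp only [maxCdf] at h2 h4 ⊢
      linarith

lemma le_maxCdf_gap_at_47 (n : ℕ) (hn : 5 ≤ n) (a : ℕ) :
    17 / 1000 * (1 - (47 / 53 : ℝ) ^ (a + 1)) ≤
      53 / 100 * maxCdf (47 / 100) (n + 1) a - 47 / 100 * maxCdf (47 / 100) n a := by
  have h := le_maxCdf_gap (p := 47 / 100) (f := fun a => 17 / 1000 * (1 - (47 / 53 : ℝ) ^ (a + 1)))
    (by norm_num) (by norm_num) (by norm_num) ?_ ?_ n hn a
  · norm_num at h ⊢
    linarith
  · intro a
    have := one_sub_pow_ratio_harmonic (p := (47 / 100 : ℝ)) (by norm_num) a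
    norm_num at this ⊢
    linarith
  · intro a
    rcases lt_or_ge a 6 with ha | ha
    · interval_cases a <;> norm_num [maxCdf]
    · rw [maxCdf_of_le _ (by omega : 5 ≤ a), maxCdf_of_le _ (by omega : 5 + 1 ≤ a)]
      have : 0 ≤ (47 / 53 : ℝ) ^ (a + 1) := by positivity
      linarith

lemma W_le_U_of_piVal_le {k : ℕ}
    (h0 : piVal (47 / 100) k 0 ≤ 2809 / 2209 * U k (47 / 100) - 3 / 250)
    (h1 : ∀ i ≤ k + 1, piVal (47 / 100) i 1 ≤ U i (47 / 100) + 21 / 10000) :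
    W (k + 2) (47 / 100) ≤ U (k + 2) (47 / 100) := by
  have h2 := piVal_add_two_le (by norm_num) (by norm_num) h1 0
  have hk := h1 k k.le_succ
  rw [W_succ, piVal_succ_zero]
  simp only [U_eq_maxCdf, maxCdf] at h0 h2 hk ⊢
  -- closes because `q ε (1 + p) ≤ p² ρ`
  linarith

lemma piVal_succ_zero_le {k : ℕ} (hk : 5 ≤ k)
    (h0 : piVal (47 / 100) k 0 ≤ 2809 / 2209 * U k (47 / 100) - 3 / 250)
    (h1 : piVal (47 / 100) k 1 ≤ U k (47 / 100) + 21 / 10000) :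
    piVal (47 / 100) (k + 1) 0 ≤ 2809 / 2209 * U (k + 1) (47 / 100) - 3 / 250 := by
  have hgap := le_maxCdf_gap_at_47 k hk 1
  rw [piVal_succ_zero]
  rw [U_eq_maxCdf] at h0 h1 ⊢
  norm_num at hgap
  -- closes because `ρ + ε ≤ δ (1 - (p/q)²) / p²`
  linarith

lemma piVal_le_at_47 (n : ℕ) :
    piVal (47 / 100) n 1 ≤ U n (47 / 100) + 21 / 10000 ∧
      (3 ≤ n → piVal (47 / 100) n 0 ≤ 2809 / 2209 * U n (47 / 100) - 3 / 250) := by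
  induction n using Nat.strong_induction_on with
  | _ n ih =>
  rcases le_or_gt n 5 with hn | hn
  -- `ε = 21/10000` just covers `π(4,1) - U_4 = W_4 - U_4 ≈ 0.00205`
  · interval_cases n <;> norm_num [W, piVal, maxCdf, U_eq_maxCdf]
  obtain ⟨k, rfl⟩ : ∃ k, n = k + 2 := ⟨n - 2, by omega⟩
  have hW := W_le_U_of_piVal_le ((ih k (by omega)).2 (by omega))
    fun i hi => (ih i (by omega)).1
  refine ⟨?_, fun _ => piVal_succ_zero_le (by omega) ((ih _ (by omega)).2 (by omega))
    (ih _ (by omega)).1⟩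
  rw [piVal_succ_one, max_eq_left hW]
  linarith

lemma W_le_U_at_47 (n : ℕ) (hn : n ≠ 4) : W n (47 / 100) ≤ U n (47 / 100) := by
  rcases le_or_gt n 5 with hn5 | hn5
  · interval_cases n <;> first | contradiction | norm_num [W, piVal, maxCdf, U_eq_maxCdf]
  obtain ⟨k, rfl⟩ : ∃ k, n = k + 2 := ⟨n - 2, by omega⟩
  exact W_le_U_of_piVal_le ((piVal_le_at_47 k).2 (by omega)) fun i _ => (piVal_le_at_47 i).1

lemma U_four (x : ℝ) : U 4 x = 2 * x * (1 - x) ^ 2 * (1 + x) + (1 - x) ^ 2 := by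
  simp only [U_eq_maxCdf, maxCdf]
  ring

lemma W_four {x : ℝ} (hx : x ≤ 1) :
    W 4 x = x ^ 2 + 2 * x * (1 - x) * piVal x 2 1 + (1 - x) ^ 2 * x ^ 2 := by
  have h11 : piVal x 1 1 = 1 := by
    simp [U_eq_maxCdf, maxCdf, piVal, hx]
  simp only [W, Nat.reduceSub, Nat.reduceAdd, piVal_succ_zero, piVal_succ_add_two, h11,
    piVal.eq_1, piVal.eq_2, piVal.eq_3]
  ring

lemma le_of_W_four_le_U_four {x : ℝ} (hx0 : 0 < x) (hx1 : x < 1) (h : W 4 x ≤ U 4 x) :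
    x ≤ 47 / 100 := by
  have h21 : (1 - x) * (1 + x) ≤ piVal x 2 1 := by
    have := U_le_piVal_one x 2
    simp only [U_eq_maxCdf, maxCdf] at this
    linarith
  have hxq : 0 ≤ x * (1 - x) := by nlinarith
  have key : x ^ 2 * (1 - x) ^ 2 ≤ 1 - 2 * x := by
    rw [W_four hx1.le, U_four] at h
    nlinarith [mul_le_mul_of_nonneg_left h21 hxq]
  by_contra! hx
  nlinarith [mul_pos (sub_pos.2 hx) (sub_pos.2 hx1)]

lemma pc_four_le : pc 4 ≤ 47 / 100 :=
  Real.sSup_le (fun _ ⟨⟨hx0, hx1⟩, h⟩ => le_of_W_four_le_U_four hx0 hx1 h) (by norm_num)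

lemma le_pc_of_ne_four {n : ℕ} (hn : n ≠ 4) : 47 / 100 ≤ pc n :=
  le_csSup ⟨1, fun _ hx => hx.1.2.le⟩ ⟨⟨by norm_num, by norm_num⟩, W_le_U_at_47 n hn⟩

theorem pc_four_smallest_general (n : ℕ) : pc n ≥ pc 4 := by
  rcases eq_or_ne n 4 with rfl | hn
  · exact le_rfl
  · exact pc_four_le.trans (le_pc_of_ne_four hn)

/-- `p_4` is the smallest term of the sequence: for every `n ≥ 1`, `p_n ≥ p_4`. -/
theorem pc_four_smallest (n : ℕ) (hn : 1 ≤ n) : pc n ≥ pc 4 :=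
  pc_four_smallest_general n
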